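/- arXiv:2009.14818 — 4 statements merged into one kernel-verified Lean document; each statement's English description precedes it below -/
import Mathlib

section
/- Let f(v) = Q v²/(2a) + (Qρ + ν)v − 2ρaμ⁺(ī − b/(a+b+wv)) with a, Q, w, μ⁺, ρ > 0, ν ≥ 0, ī ∈ (0,1), b = aī/(1−ī). Then f(0) = 0 and f′(v) = Qv/a + Qρ + ν − 2ρμ⁺((1−ī)/ī)·ι(v)²·w, where ι(v) = b/(a+b+wv), is monotone increasing in v; hence f(v) ≥ 0 for all v ≥ 0 if and only if f′(0) ≥ 0, i.e. iff Qρ + ν ≥ 2ρμ⁺(1−ī)ī w. -/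
/-!
Since `b / (a + b) = ī`, the penalty term vanishes at `v = 0`, so `f 0 = 0`. The imbalance
`ι(v) = b / (a + b + w v)` decreases on `[0, ∞)`, hence `f'` increases there. So `f ≥ 0` on
`[0, ∞)` forces `f' 0 ≥ 0` (as `0` is then a minimum of `f` on `[0, ∞)`), and conversely
`f' ≥ f' 0 ≥ 0` makes `f` nondecreasing from `f 0 = 0`. Finally `ι(0) = ī` turns `f' 0 ≥ 0`
into `Qρ + ν ≥ 2ρμ⁺(1 − ī)ī w`.
-/

open Set

theorem forall_ge_nonneg_iff_of_monotoneOn_deriv {f f' : ℝ → ℝ} {x₀ : ℝ}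
    (hf₀ : f x₀ = 0) (hf : ∀ x ≥ x₀, HasDerivAt f (f' x) x)
    (hf' : MonotoneOn f' (Ici x₀)) :
    (∀ x ≥ x₀, 0 ≤ f x) ↔ 0 ≤ f' x₀ := by
  constructor
  · intro hnonneg
    have hmin : IsLocalMinOn f (Ici x₀) x₀ :=
      IsMinOn.localize fun x hx => by simpa [hf₀] using hnonneg x hx
    have hone : (1 : ℝ) ∈ posTangentConeAt (Ici x₀) x₀ :=
      mem_posTangentConeAt_of_segment_subset <| by
        rw [segment_eq_Icc (by linarith)]; exact Icc_subset_Ici_self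
    simpa using
      hmin.hasFDerivWithinAt_nonneg (hf x₀ le_rfl).hasDerivWithinAt.hasFDerivWithinAt hone
  · intro h₀ x hx
    have hmono : MonotoneOn f (Ici x₀) :=
      monotoneOn_of_hasDerivWithinAt_nonneg (convex_Ici x₀)
        (fun y hy => (hf y hy).continuousAt.continuousWithinAt)
        (fun y hy => (hf y (interior_subset hy)).hasDerivWithinAt)
        (fun y hy => h₀.trans (hf' self_mem_Ici (interior_subset hy) (interior_subset hy)))
    simpa [hf₀] using hmono self_mem_Ici hx hx

theorem hasDerivAt_div_affine (b c w v : ℝ) (hv : c + w * v ≠ 0) :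
    HasDerivAt (fun v => b / (c + w * v)) (-(b * w) / (c + w * v) ^ 2) v := by
  have hd : HasDerivAt (fun v => c + w * v) w v := by
    simpa using ((hasDerivAt_id v).const_mul w).const_add c
  simpa using (hasDerivAt_const v b).fun_div hd hv

theorem antitoneOn_sq_div_affine {b c w : ℝ} (hb : 0 ≤ b) (hc : 0 < c) (hw : 0 ≤ w) :
    AntitoneOn (fun v => (b / (c + w * v)) ^ 2) (Ici 0) := by
  intro x hx y hy hxy
  have hx' : 0 < c + w * x := by have : (0 : ℝ) ≤ x := hx; positivity
  have hy' : 0 < c + w * y := by have : (0 : ℝ) ≤ y := hy; positivity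
  have : c + w * x ≤ c + w * y := by gcongr
  dsimp only
  gcongr

theorem div_add_self_eq_of_eq_mul_div_one_sub {a b i : ℝ} (ha : a ≠ 0) (hi : i ≠ 1)
    (hb : b = a * i / (1 - i)) : b / (a + b) = i := by
  have : 1 - i ≠ 0 := sub_ne_zero.2 hi.symm
  rw [hb]
  field_simp
  ring

theorem one_sub_div_mul_eq_of_eq_mul_div_one_sub {a b i : ℝ} (hi₀ : i ≠ 0) (hi : i ≠ 1)
    (hb : b = a * i / (1 - i)) : (1 - i) / i * b = a := by
  have : 1 - i ≠ 0 := sub_ne_zero.2 hi.symm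
  rw [hb]
  field_simp

theorem hasDerivAt_spoofing_cost {a Q w μp ρ ν ibar b : ℝ}
    (hab : (1 - ibar) / ibar * b = a) {v : ℝ} (hv : a + b + w * v ≠ 0) :
    HasDerivAt (fun v => Q * v ^ 2 / (2 * a) + (Q * ρ + ν) * v
      - 2 * ρ * a * μp * (ibar - b / (a + b + w * v)))
      (Q * v / a + Q * ρ + ν
      - 2 * ρ * μp * ((1 - ibar) / ibar) * (b / (a + b + w * v)) ^ 2 * w) v := by
  refine (((((hasDerivAt_pow 2 v).const_mul Q).div_const (2 * a)).fun_add
    ((hasDerivAt_id' v).const_mul (Q * ρ + ν))).fun_sub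
    (((hasDerivAt_div_affine b (a + b) w v hv).const_sub ibar).const_mul
      (2 * ρ * a * μp))).congr_deriv ?_
  rw [← hab]
  field_simp
  ring

theorem stmt_6_general (a Q w μp ρ ν ibar b : ℝ)
    (ha : 0 < a) (hQ : 0 < Q) (hw : 0 < w) (hμ : 0 < μp) (hρ : 0 < ρ)
    (hibar0 : 0 < ibar) (hibar1 : ibar < 1) (hb : b = a * ibar / (1 - ibar))
    (f f' : ℝ → ℝ)
    (hf : f = fun v => Q * v ^ 2 / (2 * a) + (Q * ρ + ν) * v
      - 2 * ρ * a * μp * (ibar - b / (a + b + w * v)))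
    (hf' : f' = fun v => Q * v / a + Q * ρ + ν
      - 2 * ρ * μp * ((1 - ibar) / ibar) * (b / (a + b + w * v)) ^ 2 * w) :
    f 0 = 0 ∧
    (∀ v ≥ (0 : ℝ), HasDerivAt f (f' v) v) ∧
    MonotoneOn f' (Set.Ici 0) ∧
    ((∀ v ≥ (0 : ℝ), 0 ≤ f v) ↔ 0 ≤ f' 0) ∧
    (0 ≤ f' 0 ↔ 2 * ρ * μp * (1 - ibar) * ibar * w ≤ Q * ρ + ν) := by
  have hb0 : 0 < b := by rw [hb]; have := sub_pos.2 hibar1; positivity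
  have hι₀ : b / (a + b) = ibar := div_add_self_eq_of_eq_mul_div_one_sub ha.ne' hibar1.ne hb
  have hf₀ : f 0 = 0 := by simp [hf, hι₀]
  have hf'₀ : f' 0 = Q * ρ + ν - 2 * ρ * μp * (1 - ibar) * ibar * w := by
    simp only [hf', mul_zero, zero_div, zero_add, add_zero, hι₀]
    field_simp
  have hderiv : ∀ v ≥ (0 : ℝ), HasDerivAt f (f' v) v := fun v hv => by
    rw [hf, hf']
    exact hasDerivAt_spoofing_cost
      (one_sub_div_mul_eq_of_eq_mul_div_one_sub hibar0.ne' hibar1.ne hb) (by positivity)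
  have hmono : MonotoneOn f' (Ici 0) := by
    intro x hx y hy hxy
    have hι := antitoneOn_sq_div_affine hb0.le (by positivity : 0 < a + b) hw.le hx hy hxy
    have := sub_pos.2 hibar1
    simp only [hf']
    gcongr
  refine ⟨hf₀, hderiv, hmono, forall_ge_nonneg_iff_of_monotoneOn_deriv hf₀ hderiv hmono, ?_⟩
  rw [hf'₀, sub_nonneg]

/-- For `f(v) = Qv²/(2a) + (Qρ+ν)v − 2ρaμ⁺(ibar − b/(a+b+wv))`: `f(0) = 0`, the derivative is
`f′(v) = Qv/a + Qρ + ν − 2ρμ⁺((1−ibar)/ibar)ι(v)²w` which is monotone on `[0,∞)`, and `f ≥ 0`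
on `[0,∞)` iff `f′(0) ≥ 0` iff `Qρ + ν ≥ 2ρμ⁺(1−ibar)ibar w`. -/
theorem stmt_6 (a Q w μp ρ ν ibar b : ℝ)
    (ha : 0 < a) (hQ : 0 < Q) (hw : 0 < w) (hμ : 0 < μp) (hρ : 0 < ρ) (hν : 0 ≤ ν)
    (hibar0 : 0 < ibar) (hibar1 : ibar < 1) (hb : b = a * ibar / (1 - ibar))
    (f f' : ℝ → ℝ)
    (hf : f = fun v => Q * v ^ 2 / (2 * a) + (Q * ρ + ν) * v
      - 2 * ρ * a * μp * (ibar - b / (a + b + w * v)))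
    (hf' : f' = fun v => Q * v / a + Q * ρ + ν
      - 2 * ρ * μp * ((1 - ibar) / ibar) * (b / (a + b + w * v)) ^ 2 * w) :
    f 0 = 0 ∧
    (∀ v ≥ (0 : ℝ), HasDerivAt f (f' v) v) ∧
    MonotoneOn f' (Set.Ici 0) ∧
    ((∀ v ≥ (0 : ℝ), 0 ≤ f v) ↔ 0 ≤ f' 0) ∧
    (0 ≤ f' 0 ↔ 2 * ρ * μp * (1 - ibar) * ibar * w ≤ Q * ρ + ν) :=
  stmt_6_general a Q w μp ρ ν ibar b ha hQ hw hμ hρ hibar0 hibar1 hb f f' hf hf'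
end

section
/- Define g(ι; w) = 1/ī + (w/Q)((1−ī)/ī)[2ρwμ⁺((1−ī)/ī)ι² − (Qρ+ν)]⁺ and let ι*(w) ∈ (0, ī] be the unique solution of 1/ι = g(ι; w). Then ι*(w) is nonincreasing in w: if w₁ ≤ w₂ then ι*(w₂) ≤ ι*(w₁). The same monotonicity holds with respect to μ⁺, and ι* is nondecreasing as a function of Q and of ν. -/
/-!
Both sides of `1/ι = g(ι)` move in opposite directions as functions of `ι`: the left side is
strictly decreasing and `g` is nondecreasing on `ι > 0`. Hence raising `g` pointwise (by raising
`w` or `μ⁺`, or lowering `Q` or `ν`) can only move the crossing point to the left.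
-/

open Set

/-- The right-hand side `g(ι; w)` of the fixed-point equation, with `ibar = ī` and `μ = μ⁺`. -/
noncomputable def imbalanceG (ibar ρ μ Q w ν ι : ℝ) : ℝ :=
  1 / ibar + (w / Q) * ((1 - ibar) / ibar)
    * max (2 * ρ * w * μ * ((1 - ibar) / ibar) * ι ^ 2 - (Q * ρ + ν)) 0

theorem le_of_one_div_eq_of_le_of_monotoneOn {f g : ℝ → ℝ} {x y : ℝ} (hx : 0 < x)
    (hg : MonotoneOn g (Ioi 0)) (hfg : f x ≤ g x) (ex : 1 / x = f x) (ey : 1 / y = g y) :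
    y ≤ x := by
  by_contra! hxy
  have hy : 0 < y := hx.trans hxy
  have : 1 / y < 1 / y :=
    calc 1 / y < 1 / x := one_div_lt_one_div_of_lt hx hxy
      _ = f x := ex
      _ ≤ g x := hfg
      _ ≤ g y := hg hx hy hxy.le
      _ = 1 / y := ey.symm
  exact this.false

section imbalanceG

variable {ibar ρ μ Q w ν ι : ℝ}

theorem imbalanceG_monotoneOn (hr : 0 ≤ (1 - ibar) / ibar) (hρ : 0 ≤ ρ) (hμ : 0 ≤ μ)
    (hQ : 0 ≤ Q) (hw : 0 ≤ w) : MonotoneOn (imbalanceG ibar ρ μ Q w ν) (Ici 0) := by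
  intro x (hx : 0 ≤ x) y _ hxy
  simp only [imbalanceG]
  gcongr

theorem imbalanceG_monotoneOn_w (hr : 0 ≤ (1 - ibar) / ibar) (hρ : 0 ≤ ρ)
    (hμ : 0 ≤ μ) (hQ : 0 ≤ Q) : MonotoneOn (fun w ↦ imbalanceG ibar ρ μ Q w ν ι) (Ici 0) := by
  intro w₁ _ w₂ (hw₂ : 0 ≤ w₂) hw
  simp only [imbalanceG]
  gcongr

theorem imbalanceG_monotone_μ (hr : 0 ≤ (1 - ibar) / ibar) (hρ : 0 ≤ ρ)
    (hQ : 0 ≤ Q) (hw : 0 ≤ w) : Monotone (fun μ ↦ imbalanceG ibar ρ μ Q w ν ι) := by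
  intro μ₁ μ₂ hμ
  simp only [imbalanceG]
  gcongr

theorem imbalanceG_antitoneOn_Q (hr : 0 ≤ (1 - ibar) / ibar) (hρ : 0 ≤ ρ)
    (hw : 0 ≤ w) : AntitoneOn (fun Q ↦ imbalanceG ibar ρ μ Q w ν ι) (Ioi 0) := by
  intro Q₁ (hQ₁ : 0 < Q₁) Q₂ _ hQ
  simp only [imbalanceG]
  gcongr

theorem imbalanceG_antitone_ν (hr : 0 ≤ (1 - ibar) / ibar) (hQ : 0 ≤ Q)
    (hw : 0 ≤ w) : Antitone (fun ν ↦ imbalanceG ibar ρ μ Q w ν ι) := by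
  intro ν₁ ν₂ hν
  simp only [imbalanceG]
  gcongr

end imbalanceG

theorem stmt_10_general (ibar ρ μp Q w ν : ℝ)
    (hibar0 : 0 < ibar) (hibar1 : ibar < 1) (hρ : 0 < ρ) (hμ : 0 < μp) (hQ : 0 < Q) (hw : 0 < w) :
    (∀ w₁ w₂ ι₁ ι₂ : ℝ, 0 < w₁ → w₁ ≤ w₂ →
      ι₁ ∈ Set.Ioc (0 : ℝ) ibar → ι₂ ∈ Set.Ioc (0 : ℝ) ibar →
      1 / ι₁ = 1 / ibar + (w₁ / Q) * ((1 - ibar) / ibar)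
        * max (2 * ρ * w₁ * μp * ((1 - ibar) / ibar) * ι₁ ^ 2 - (Q * ρ + ν)) 0 →
      1 / ι₂ = 1 / ibar + (w₂ / Q) * ((1 - ibar) / ibar)
        * max (2 * ρ * w₂ * μp * ((1 - ibar) / ibar) * ι₂ ^ 2 - (Q * ρ + ν)) 0 →
      ι₂ ≤ ι₁) ∧
    (∀ μ₁ μ₂ ι₁ ι₂ : ℝ, 0 < μ₁ → μ₁ ≤ μ₂ →
      ι₁ ∈ Set.Ioc (0 : ℝ) ibar → ι₂ ∈ Set.Ioc (0 : ℝ) ibar →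
      1 / ι₁ = 1 / ibar + (w / Q) * ((1 - ibar) / ibar)
        * max (2 * ρ * w * μ₁ * ((1 - ibar) / ibar) * ι₁ ^ 2 - (Q * ρ + ν)) 0 →
      1 / ι₂ = 1 / ibar + (w / Q) * ((1 - ibar) / ibar)
        * max (2 * ρ * w * μ₂ * ((1 - ibar) / ibar) * ι₂ ^ 2 - (Q * ρ + ν)) 0 →
      ι₂ ≤ ι₁) ∧
    (∀ Q₁ Q₂ ι₁ ι₂ : ℝ, 0 < Q₁ → Q₁ ≤ Q₂ →
      ι₁ ∈ Set.Ioc (0 : ℝ) ibar → ι₂ ∈ Set.Ioc (0 : ℝ) ibar →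
      1 / ι₁ = 1 / ibar + (w / Q₁) * ((1 - ibar) / ibar)
        * max (2 * ρ * w * μp * ((1 - ibar) / ibar) * ι₁ ^ 2 - (Q₁ * ρ + ν)) 0 →
      1 / ι₂ = 1 / ibar + (w / Q₂) * ((1 - ibar) / ibar)
        * max (2 * ρ * w * μp * ((1 - ibar) / ibar) * ι₂ ^ 2 - (Q₂ * ρ + ν)) 0 →
      ι₁ ≤ ι₂) ∧
    (∀ ν₁ ν₂ ι₁ ι₂ : ℝ, 0 ≤ ν₁ → ν₁ ≤ ν₂ →
      ι₁ ∈ Set.Ioc (0 : ℝ) ibar → ι₂ ∈ Set.Ioc (0 : ℝ) ibar →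
      1 / ι₁ = 1 / ibar + (w / Q) * ((1 - ibar) / ibar)
        * max (2 * ρ * w * μp * ((1 - ibar) / ibar) * ι₁ ^ 2 - (Q * ρ + ν₁)) 0 →
      1 / ι₂ = 1 / ibar + (w / Q) * ((1 - ibar) / ibar)
        * max (2 * ρ * w * μp * ((1 - ibar) / ibar) * ι₂ ^ 2 - (Q * ρ + ν₂)) 0 →
      ι₁ ≤ ι₂) := by
  have hr : 0 ≤ (1 - ibar) / ibar := div_nonneg (by linarith) hibar0.le
  have hg_mono {μ Q w ν : ℝ} (hμ : 0 ≤ μ) (hQ : 0 ≤ Q) (hw : 0 ≤ w) :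
      MonotoneOn (imbalanceG ibar ρ μ Q w ν) (Ioi 0) :=
    (imbalanceG_monotoneOn hr hρ.le hμ hQ hw).mono Ioi_subset_Ici_self
  refine ⟨?_, ?_, ?_, ?_⟩
  · intro w₁ w₂ ι₁ ι₂ hw₁ hw₁₂ hι₁ _ e₁ e₂
    have hw₂ : 0 ≤ w₂ := hw₁.le.trans hw₁₂
    exact le_of_one_div_eq_of_le_of_monotoneOn hι₁.1 (hg_mono hμ.le hQ.le hw₂)
      (imbalanceG_monotoneOn_w hr hρ.le hμ.le hQ.le hw₁.le hw₂ hw₁₂) e₁ e₂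
  · intro μ₁ μ₂ ι₁ ι₂ hμ₁ hμ₁₂ hι₁ _ e₁ e₂
    exact le_of_one_div_eq_of_le_of_monotoneOn hι₁.1 (hg_mono (hμ₁.le.trans hμ₁₂) hQ.le hw.le)
      (imbalanceG_monotone_μ hr hρ.le hQ.le hw.le hμ₁₂) e₁ e₂
  · intro Q₁ Q₂ ι₁ ι₂ hQ₁ hQ₁₂ _ hι₂ e₁ e₂
    have hQ₂ : 0 < Q₂ := hQ₁.trans_le hQ₁₂
    exact le_of_one_div_eq_of_le_of_monotoneOn hι₂.1 (hg_mono hμ.le hQ₁.le hw.le)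
      (imbalanceG_antitoneOn_Q hr hρ.le hw.le hQ₁ hQ₂ hQ₁₂) e₂ e₁
  · intro ν₁ ν₂ ι₁ ι₂ _ hν₁₂ _ hι₂ e₁ e₂
    exact le_of_one_div_eq_of_le_of_monotoneOn hι₂.1 (hg_mono hμ.le hQ.le hw.le)
      (imbalanceG_antitone_ν hr hQ.le hw.le hν₁₂) e₂ e₁

/-- Monotonicity of the optimal spoofed imbalance: the solution `ι*` of the fixed-point
equation in `(0, ibar]` is nonincreasing in `w` and in `μ⁺`, and nondecreasing in `Q` and `ν`. -/
theorem stmt_10 (ibar ρ μp Q w ν : ℝ)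
    (hibar0 : 0 < ibar) (hibar1 : ibar < 1) (hρ : 0 < ρ) (hμ : 0 < μp) (hQ : 0 < Q) (hw : 0 < w)
    (hν : 0 ≤ ν) :
    (∀ w₁ w₂ ι₁ ι₂ : ℝ, 0 < w₁ → w₁ ≤ w₂ →
      ι₁ ∈ Set.Ioc (0 : ℝ) ibar → ι₂ ∈ Set.Ioc (0 : ℝ) ibar →
      1 / ι₁ = 1 / ibar + (w₁ / Q) * ((1 - ibar) / ibar)
        * max (2 * ρ * w₁ * μp * ((1 - ibar) / ibar) * ι₁ ^ 2 - (Q * ρ + ν)) 0 →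
      1 / ι₂ = 1 / ibar + (w₂ / Q) * ((1 - ibar) / ibar)
        * max (2 * ρ * w₂ * μp * ((1 - ibar) / ibar) * ι₂ ^ 2 - (Q * ρ + ν)) 0 →
      ι₂ ≤ ι₁) ∧
    (∀ μ₁ μ₂ ι₁ ι₂ : ℝ, 0 < μ₁ → μ₁ ≤ μ₂ →
      ι₁ ∈ Set.Ioc (0 : ℝ) ibar → ι₂ ∈ Set.Ioc (0 : ℝ) ibar →
      1 / ι₁ = 1 / ibar + (w / Q) * ((1 - ibar) / ibar)
        * max (2 * ρ * w * μ₁ * ((1 - ibar) / ibar) * ι₁ ^ 2 - (Q * ρ + ν)) 0 →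
      1 / ι₂ = 1 / ibar + (w / Q) * ((1 - ibar) / ibar)
        * max (2 * ρ * w * μ₂ * ((1 - ibar) / ibar) * ι₂ ^ 2 - (Q * ρ + ν)) 0 →
      ι₂ ≤ ι₁) ∧
    (∀ Q₁ Q₂ ι₁ ι₂ : ℝ, 0 < Q₁ → Q₁ ≤ Q₂ →
      ι₁ ∈ Set.Ioc (0 : ℝ) ibar → ι₂ ∈ Set.Ioc (0 : ℝ) ibar →
      1 / ι₁ = 1 / ibar + (w / Q₁) * ((1 - ibar) / ibar)
        * max (2 * ρ * w * μp * ((1 - ibar) / ibar) * ι₁ ^ 2 - (Q₁ * ρ + ν)) 0 →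
      1 / ι₂ = 1 / ibar + (w / Q₂) * ((1 - ibar) / ibar)
        * max (2 * ρ * w * μp * ((1 - ibar) / ibar) * ι₂ ^ 2 - (Q₂ * ρ + ν)) 0 →
      ι₁ ≤ ι₂) ∧
    (∀ ν₁ ν₂ ι₁ ι₂ : ℝ, 0 ≤ ν₁ → ν₁ ≤ ν₂ →
      ι₁ ∈ Set.Ioc (0 : ℝ) ibar → ι₂ ∈ Set.Ioc (0 : ℝ) ibar →
      1 / ι₁ = 1 / ibar + (w / Q) * ((1 - ibar) / ibar)
        * max (2 * ρ * w * μp * ((1 - ibar) / ibar) * ι₁ ^ 2 - (Q * ρ + ν₁)) 0 →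
      1 / ι₂ = 1 / ibar + (w / Q) * ((1 - ibar) / ibar)
        * max (2 * ρ * w * μp * ((1 - ibar) / ibar) * ι₂ ^ 2 - (Q * ρ + ν₂)) 0 →
      ι₁ ≤ ι₂) :=
  stmt_10_general ibar ρ μp Q w ν hibar0 hibar1 hρ hμ hQ hw
end

section
/- Let ī ∈ (0, 1/2] and consider the no-spoofing condition N(k) : 2ρμ⁺(1−ī)ī w_k ≤ Q_k ρ + ν_k. The limit order book admits a spoofing manipulation if and only if N(k) fails for some depth k ∈ {0, 1, ..., N}. Moreover, if N(k) fails for some k, it also fails for any parameters with larger w_k or larger μ⁺ while Q_k and ν_k are fixed, i.e. the set of parameter vectors (w_k, μ⁺) admitting spoofing is upward closed. -/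
set_option maxHeartbeats 1000000

/-- For `ibar ≤ 1/2`, the block-shaped limit order book admits a spoofing manipulation iff the
no-spoofing condition `N(k) : 2ρμ⁺(1−ibar)ibar w_k ≤ Q_k ρ + ν_k` fails for some depth `k ≤ N`;
moreover the set of parameters `(w_k, μ⁺)` for which `N(k)` fails is upward closed. -/
theorem stmt_15 (a ρ μp δ p ibar b : ℝ) (N : ℕ) (w Q ν : ℕ → ℝ)
    (ha : 0 < a) (hρ : 0 < ρ) (hμ : 0 < μp) (hδ : 0 < δ)
    (hibar0 : 0 < ibar) (hibar : ibar ≤ 1 / 2) (hb : b = a * ibar / (1 - ibar))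
    (hw : ∀ k, 0 < w k) (hQ : ∀ k, 0 < Q k) (hν : ∀ k, 0 ≤ ν k) :
    ((∃ k ≤ N, ∃ v > (0 : ℝ),
        p * (ρ * a) + δ * (1 - Q k) * ((ρ * a) ^ 2 / (2 * a))
          + δ * (ρ * a) * μp * (2 * (b / (a + b + w k * v)) - 1)
          + δ * (Q k) * ((ρ * a + v) ^ 2 / (2 * a)) + δ * v * ν k
        < p * (ρ * a) + δ * ((ρ * a) ^ 2 / (2 * a) + μp * (ρ * a) * (2 * ibar - 1)))
      ↔ ∃ k ≤ N, ¬ (2 * ρ * μp * (1 - ibar) * ibar * w k ≤ Q k * ρ + ν k)) ∧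
    (∀ k ≤ N, ∀ w' μ', w k ≤ w' → μp ≤ μ' →
      ¬ (2 * ρ * μp * (1 - ibar) * ibar * w k ≤ Q k * ρ + ν k) →
      ¬ (2 * ρ * μ' * (1 - ibar) * ibar * w' ≤ Q k * ρ + ν k)) := by
  have h1i : 0 < 1 - ibar := by linarith
  have hb0 : 0 < b := by rw [hb]; positivity
  have hA : 0 < a + b := by linarith
  have hib : ibar = b / (a + b) := by
    rw [hb]
    field_simp
    ring
  have main : ∀ k, ((∃ v > (0 : ℝ),
        p * (ρ * a) + δ * (1 - Q k) * ((ρ * a) ^ 2 / (2 * a))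
          + δ * (ρ * a) * μp * (2 * (b / (a + b + w k * v)) - 1)
          + δ * (Q k) * ((ρ * a + v) ^ 2 / (2 * a)) + δ * v * ν k
        < p * (ρ * a) + δ * ((ρ * a) ^ 2 / (2 * a) + μp * (ρ * a) * (2 * ibar - 1)))
      ↔ Q k * ρ + ν k < 2 * ρ * μp * (1 - ibar) * ibar * w k) := by
    intro k
    have hwk := hw k
    have hQk := hQ k
    have hνk := hν k
    set f₀ : ℝ := Q k * ρ + ν k - 2 * ρ * μp * (1 - ibar) * ibar * w k with hf₀
    -- key identity for v > 0
    have key : ∀ v : ℝ, 0 < v →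
        (p * (ρ * a) + δ * (1 - Q k) * ((ρ * a) ^ 2 / (2 * a))
          + δ * (ρ * a) * μp * (2 * (b / (a + b + w k * v)) - 1)
          + δ * (Q k) * ((ρ * a + v) ^ 2 / (2 * a)) + δ * v * ν k)
          - (p * (ρ * a) + δ * ((ρ * a) ^ 2 / (2 * a) + μp * (ρ * a) * (2 * ibar - 1)))
        = δ * v * (f₀ + (Q k * v / (2 * a)
            + 2 * ρ * a * μp * b * (w k) ^ 2 * v / ((a + b + w k * v) * (a + b) ^ 2))) := by
      intro v hv
      have hs : 0 < a + b + w k * v := by positivity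
      rw [hf₀, hib]
      field_simp
      ring
    constructor
    · rintro ⟨v, hv, hlt⟩
      have hd := key v hv
      have hs : 0 < a + b + w k * v := by positivity
      have h1 : δ * v * (f₀ + (Q k * v / (2 * a)
            + 2 * ρ * a * μp * b * (w k) ^ 2 * v / ((a + b + w k * v) * (a + b) ^ 2))) < 0 := by
        rw [← hd]; linarith
      have h2 : f₀ + (Q k * v / (2 * a)
            + 2 * ρ * a * μp * b * (w k) ^ 2 * v / ((a + b + w k * v) * (a + b) ^ 2)) < 0 := by
        by_contra hc
        push_neg at hc
        nlinarith [mul_pos hδ hv]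
      have hg1 : 0 < Q k * v / (2 * a) := by positivity
      have hg2 : 0 < 2 * ρ * a * μp * b * (w k) ^ 2 * v / ((a + b + w k * v) * (a + b) ^ 2) := by
        positivity
      linarith
    · intro hfail
      have hf0neg : f₀ < 0 := by rw [hf₀]; linarith
      set M : ℝ := Q k / (2 * a) + 2 * ρ * a * μp * b * (w k) ^ 2 / ((a + b) ^ 3) with hM
      have hMpos : 0 < M := by rw [hM]; positivity
      set v : ℝ := -f₀ / (2 * M) with hvdef
      have hf0neg' : 0 < -f₀ := by linarith
      have hv : 0 < v := by rw [hvdef]; exact div_pos hf0neg' (by positivity)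
      refine ⟨v, hv, ?_⟩
      have hd := key v hv
      have hs : 0 < a + b + w k * v := by positivity
      -- bound g v ≤ v * M
      have hbound : Q k * v / (2 * a)
            + 2 * ρ * a * μp * b * (w k) ^ 2 * v / ((a + b + w k * v) * (a + b) ^ 2)
          ≤ v * M := by
        rw [hM]
        have h1 : 2 * ρ * a * μp * b * (w k) ^ 2 * v / ((a + b + w k * v) * (a + b) ^ 2)
            ≤ 2 * ρ * a * μp * b * (w k) ^ 2 * v / ((a + b) * (a + b) ^ 2) := by
          apply div_le_div_of_nonneg_left (by positivity) (by positivity)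
          nlinarith [mul_pos hwk hv]
        have h2 : (a + b) * (a + b) ^ 2 = (a + b) ^ 3 := by ring
        rw [h2] at h1
        have : v * (Q k / (2 * a) + 2 * ρ * a * μp * b * (w k) ^ 2 / ((a + b) ^ 3))
            = Q k * v / (2 * a) + 2 * ρ * a * μp * b * (w k) ^ 2 * v / ((a + b) ^ 3) := by
          ring
        rw [this]
        linarith
      have hvM : v * M = -f₀ / 2 := by
        rw [hvdef]; field_simp
      have hFneg : f₀ + (Q k * v / (2 * a)
            + 2 * ρ * a * μp * b * (w k) ^ 2 * v / ((a + b + w k * v) * (a + b) ^ 2)) < 0 := by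
        have := hbound
        rw [hvM] at this
        linarith
      have : δ * v * (f₀ + (Q k * v / (2 * a)
            + 2 * ρ * a * μp * b * (w k) ^ 2 * v / ((a + b + w k * v) * (a + b) ^ 2))) < 0 := by
        have hδv : 0 < δ * v := by positivity
        exact mul_neg_of_pos_of_neg hδv hFneg
      linarith [hd ▸ this]
  constructor
  · constructor
    · rintro ⟨k, hk, hv⟩
      exact ⟨k, hk, by push_neg; exact (main k).mp hv⟩
    · rintro ⟨k, hk, hfail⟩
      push_neg at hfail
      exact ⟨k, hk, (main k).mpr hfail⟩
  · intro k hk w' μ' hww hμμ hfail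
    push_neg at hfail ⊢
    have hwk := hw k
    nlinarith [mul_pos hρ (mul_pos hμ (mul_pos h1i hibar0)),
      mul_le_mul hμμ hww (le_of_lt hwk) (le_of_lt (lt_of_lt_of_le hμ hμμ))]
end

section
/- For probability measures μ, ν on ℝ with finite second moments, the 2-Wasserstein distance satisfies W₂(μ, ν)² = ∫₀¹ (q_μ(α) − q_ν(α))² dα, where q_μ, q_ν are the quantile functions; i.e. the optimal coupling on the real line is given by the comonotone (quantile) coupling. -/
open MeasureTheory

/-- The quantile function `q_μ(α) = inf{x : μ((−∞, x]) ≥ α}` of a measure on `ℝ`. -/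
noncomputable def quantileFn (μ : Measure ℝ) (α : ℝ) : ℝ :=
  sInf {x : ℝ | α ≤ (μ (Set.Iic x)).toReal}

/-- The squared 2-Wasserstein distance between `μ` and `ν`, as the infimum of
`∫ (x−y)² dπ` over couplings `π` of `μ` and `ν`. -/
noncomputable def wasserstein2Sq (μ ν : Measure ℝ) : ℝ :=
  sInf {r : ℝ | ∃ π : Measure (ℝ × ℝ), IsProbabilityMeasure π ∧
    π.map Prod.fst = μ ∧ π.map Prod.snd = ν ∧ r = ∫ p : ℝ × ℝ, (p.1 - p.2) ^ 2 ∂π}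

/-!
Writing `x = ∫ (1_{s<x} - 1_{s<0}) ds` turns `∫ x y dπ` into a double integral over `(s, t)` whose
integrand depends on the coupling `π` only through the orthant probability `π((s,∞) × (t,∞))` and
the marginals (Hoeffding's identity). That probability is at most `min (μ(s,∞)) (ν(t,∞))`, and the
quantile coupling, the image of the uniform measure on `(0,1)` under `α ↦ (q_μ α, q_ν α)`, attains
this bound. So the quantile coupling maximizes `∫ x y dπ`, hence minimizes
`∫ (x - y)² dπ = ∫ x² dμ + ∫ y² dν - 2 ∫ x y dπ`.
-/

open Set Filter ProbabilityTheory

section Quantile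

variable {μ : Measure ℝ} {α x : ℝ}

lemma nonempty_setOf_le_cdf (hα : α < 1) : {x | α ≤ cdf μ x}.Nonempty :=
  ((tendsto_cdf_atTop μ).eventually (eventually_ge_nhds hα)).exists

lemma bddBelow_setOf_le_cdf (hα : 0 < α) : BddBelow {x | α ≤ cdf μ x} := by
  obtain ⟨b, hb⟩ := eventually_atBot.1 ((tendsto_cdf_atBot μ).eventually (eventually_lt_nhds hα))
  exact ⟨b, fun x hx => le_of_not_ge fun hxb => (hb x hxb).not_ge hx⟩

variable [IsProbabilityMeasure μ]

lemma quantileFn_eq_sInf_cdf : quantileFn μ α = sInf {x | α ≤ cdf μ x} := by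
  simp only [quantileFn, cdf_eq_real, measureReal_def]

lemma le_cdf_quantileFn (hα : α ∈ Ioo 0 1) : α ≤ cdf μ (quantileFn μ α) := by
  rw [quantileFn_eq_sInf_cdf]
  refine ge_of_tendsto ((continuousWithinAt_Ioi_iff_Ici.2 ((cdf μ).right_continuous _)).tendsto)
    (eventually_nhdsWithin_of_forall fun x hx => ?_)
  obtain ⟨y, hy, hyx⟩ := exists_lt_of_csInf_lt (nonempty_setOf_le_cdf hα.2) hx
  exact hy.trans (monotone_cdf μ hyx.le)

lemma quantileFn_le_iff (hα : α ∈ Ioo 0 1) : quantileFn μ α ≤ x ↔ α ≤ cdf μ x :=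
  ⟨fun h => (le_cdf_quantileFn hα).trans (monotone_cdf μ h), fun h => by
    rw [quantileFn_eq_sInf_cdf]; exact csInf_le (bddBelow_setOf_le_cdf hα.1) h⟩

lemma lt_quantileFn_iff (hα : α ∈ Ioo 0 1) : x < quantileFn μ α ↔ cdf μ x < α := by
  simpa only [not_le] using (quantileFn_le_iff hα).not

lemma monotoneOn_quantileFn : MonotoneOn (quantileFn μ) (Ioo 0 1) := fun _ ha _ hb hab =>
  (quantileFn_le_iff ha).2 (hab.trans (le_cdf_quantileFn hb))

end Quantile

section QuantileCoupling

instance : IsProbabilityMeasure (volume.restrict (Ioo (0 : ℝ) 1)) :=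
  ⟨by simp [Real.volume_Ioo]⟩

lemma volume_restrict_Ioo_real_Iic {c : ℝ} (hc : c ∈ Icc 0 1) :
    (volume.restrict (Ioo (0 : ℝ) 1)).real (Iic c) = c := by
  rw [measureReal_def, Measure.restrict_congr_set Ioo_ae_eq_Ioc,
    Measure.restrict_apply measurableSet_Iic, Iic_inter_Ioc_of_le hc.2, Real.volume_Ioc,
    sub_zero, ENNReal.toReal_ofReal hc.1]

lemma volume_restrict_Ioo_real_Ioi {c : ℝ} (hc : c ∈ Icc 0 1) :
    (volume.restrict (Ioo (0 : ℝ) 1)).real (Ioi c) = 1 - c := by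
  rw [← compl_Iic, probReal_compl_eq_one_sub measurableSet_Iic, volume_restrict_Ioo_real_Iic hc]

variable (μ ν : Measure ℝ) [IsProbabilityMeasure μ] [IsProbabilityMeasure ν]

lemma aemeasurable_quantileFn : AEMeasurable (quantileFn μ) (volume.restrict (Ioo 0 1)) :=
  aemeasurable_restrict_of_monotoneOn measurableSet_Ioo monotoneOn_quantileFn

lemma map_quantileFn : (volume.restrict (Ioo (0 : ℝ) 1)).map (quantileFn μ) = μ := by
  have : IsProbabilityMeasure ((volume.restrict (Ioo (0 : ℝ) 1)).map (quantileFn μ)) :=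
    Measure.isProbabilityMeasure_map (aemeasurable_quantileFn μ)
  refine Measure.ext_of_Iic _ _ fun x => ?_
  have hpre : quantileFn μ ⁻¹' Iic x ∩ Ioo 0 1 = Iic (cdf μ x) ∩ Ioo 0 1 := by
    ext α
    simp only [mem_inter_iff, mem_preimage, mem_Iic]
    exact and_congr_left fun hα => quantileFn_le_iff hα
  rw [← ofReal_cdf μ, ← volume_restrict_Ioo_real_Iic ⟨cdf_nonneg μ x, cdf_le_one μ x⟩,
    ofReal_measureReal (measure_ne_top _ _),
    Measure.map_apply_of_aemeasurable (aemeasurable_quantileFn μ) measurableSet_Iic,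
    Measure.restrict_apply' measurableSet_Ioo, Measure.restrict_apply' measurableSet_Ioo, hpre]

lemma measureReal_Ioi_eq_one_sub_cdf (x : ℝ) : μ.real (Ioi x) = 1 - cdf μ x := by
  rw [← compl_Iic, probReal_compl_eq_one_sub measurableSet_Iic, cdf_eq_real]

noncomputable def quantileCoupling : Measure (ℝ × ℝ) :=
  (volume.restrict (Ioo (0 : ℝ) 1)).map fun α => (quantileFn μ α, quantileFn ν α)

lemma aemeasurable_quantileFn_prod :
    AEMeasurable (fun α => (quantileFn μ α, quantileFn ν α)) (volume.restrict (Ioo 0 1)) :=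
  (aemeasurable_quantileFn μ).prodMk (aemeasurable_quantileFn ν)

instance : IsProbabilityMeasure (quantileCoupling μ ν) :=
  Measure.isProbabilityMeasure_map (aemeasurable_quantileFn_prod μ ν)

lemma map_fst_quantileCoupling : (quantileCoupling μ ν).map Prod.fst = μ := by
  rw [quantileCoupling, AEMeasurable.map_map_of_aemeasurable measurable_fst.aemeasurable
    (aemeasurable_quantileFn_prod μ ν)]
  exact map_quantileFn μ

lemma map_snd_quantileCoupling : (quantileCoupling μ ν).map Prod.snd = ν := by
  rw [quantileCoupling, AEMeasurable.map_map_of_aemeasurable measurable_snd.aemeasurable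
    (aemeasurable_quantileFn_prod μ ν)]
  exact map_quantileFn ν

lemma integral_sub_sq_quantileCoupling :
    ∫ p : ℝ × ℝ, (p.1 - p.2) ^ 2 ∂quantileCoupling μ ν
      = ∫ α in Ioo (0 : ℝ) 1, (quantileFn μ α - quantileFn ν α) ^ 2 :=
  integral_map (aemeasurable_quantileFn_prod μ ν) (by fun_prop)

lemma measureReal_quantileCoupling_Ioi_prod_Ioi (s t : ℝ) :
    (quantileCoupling μ ν).real (Ioi s ×ˢ Ioi t) = min (μ.real (Ioi s)) (ν.real (Ioi t)) := by
  have hpre : (fun α => (quantileFn μ α, quantileFn ν α)) ⁻¹' (Ioi s ×ˢ Ioi t) ∩ Ioo 0 1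
      = Ioi (max (cdf μ s) (cdf ν t)) ∩ Ioo 0 1 := by
    ext α
    simp only [mem_inter_iff, mem_preimage, mem_prod, mem_Ioi, max_lt_iff]
    exact and_congr_left fun hα => and_congr (lt_quantileFn_iff hα) (lt_quantileFn_iff hα)
  rw [measureReal_Ioi_eq_one_sub_cdf, measureReal_Ioi_eq_one_sub_cdf, min_sub_sub_left,
    ← volume_restrict_Ioo_real_Ioi ⟨le_max_of_le_left (cdf_nonneg μ s),
      max_le (cdf_le_one μ s) (cdf_le_one ν t)⟩,
    quantileCoupling, map_measureReal_apply_of_aemeasurable (aemeasurable_quantileFn_prod μ ν)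
      (measurableSet_Ioi.prod measurableSet_Ioi), measureReal_def, measureReal_def,
    Measure.restrict_apply' measurableSet_Ioo, Measure.restrict_apply' measurableSet_Ioo, hpre]

end QuantileCoupling

section Layer

noncomputable def layer (x s : ℝ) : ℝ := (if s < x then 1 else 0) - if s < 0 then 1 else 0

lemma measurable_layer_uncurry : Measurable fun q : ℝ × ℝ => layer q.1 q.2 :=
  (Measurable.ite (measurableSet_lt measurable_snd measurable_fst) measurable_const
    measurable_const).sub
    (Measurable.ite (measurableSet_lt measurable_snd measurable_const) measurable_const
      measurable_const)

lemma layer_eq_indicator_sub_indicator (x : ℝ) :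
    layer x = (Ico 0 x).indicator 1 - (Ico x 0).indicator 1 := by
  ext s
  simp only [layer, Pi.sub_apply, indicator_apply, mem_Ico, Pi.one_apply]
  split_ifs <;> grind

lemma norm_layer (x s : ℝ) : ‖layer x s‖ = (Ico 0 x).indicator 1 s + (Ico x 0).indicator 1 s := by
  simp only [layer, indicator_apply, mem_Ico, Pi.one_apply, Real.norm_eq_abs]
  split_ifs <;> grind

lemma integrable_indicator_one_Ico (a b : ℝ) : Integrable ((Ico a b).indicator (1 : ℝ → ℝ)) :=
  (integrableOn_const measure_Ico_lt_top.ne).integrable_indicator measurableSet_Ico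

lemma integrable_layer (x : ℝ) : Integrable (layer x) := by
  rw [layer_eq_indicator_sub_indicator]
  exact (integrable_indicator_one_Ico _ _).sub (integrable_indicator_one_Ico _ _)

lemma integral_layer (x : ℝ) : ∫ s, layer x s = x := by
  rw [layer_eq_indicator_sub_indicator, Pi.sub_def, integral_sub (integrable_indicator_one_Ico _ _)
    (integrable_indicator_one_Ico _ _), integral_indicator_one measurableSet_Ico,
    integral_indicator_one measurableSet_Ico, Real.volume_real_Ico, Real.volume_real_Ico,
    sub_zero, zero_sub, max_zero_sub_max_neg_zero_eq_self]

lemma integral_norm_layer (x : ℝ) : ∫ s, ‖layer x s‖ = |x| := by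
  simp_rw [norm_layer]
  rw [integral_add (integrable_indicator_one_Ico _ _) (integrable_indicator_one_Ico _ _),
    integral_indicator_one measurableSet_Ico,
    integral_indicator_one measurableSet_Ico, Real.volume_real_Ico, Real.volume_real_Ico,
    sub_zero, zero_sub, max_zero_add_max_neg_zero_eq_abs_self]

end Layer

section Hoeffding

variable {π ρ : Measure (ℝ × ℝ)}

lemma integrable_layer_mul_layer [SFinite π] (h : Integrable (fun p : ℝ × ℝ => p.1 * p.2) π) :
    Integrable (fun q : (ℝ × ℝ) × ℝ × ℝ => layer q.1.1 q.2.1 * layer q.1.2 q.2.2)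
      (π.prod (volume.prod volume)) := by
  have hmeas : Measurable fun q : (ℝ × ℝ) × ℝ × ℝ => layer q.1.1 q.2.1 * layer q.1.2 q.2.2 :=
    (measurable_layer_uncurry.comp (measurable_fst.fst.prodMk measurable_snd.fst)).mul
      (measurable_layer_uncurry.comp (measurable_fst.snd.prodMk measurable_snd.snd))
  refine (integrable_prod_iff hmeas.aestronglyMeasurable).2
    ⟨ae_of_all _ fun p => (integrable_layer p.1).mul_prod (integrable_layer p.2), ?_⟩
  refine h.norm.congr (ae_of_all _ fun p => ?_)
  simp only [norm_mul]
  rw [integral_prod_mul (fun s => ‖layer p.1 s‖) (fun t => ‖layer p.2 t‖), integral_norm_layer,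
    integral_norm_layer, Real.norm_eq_abs, Real.norm_eq_abs]

lemma integral_fst_mul_snd_eq_integral_integral_layer [SFinite π]
    (h : Integrable (fun p : ℝ × ℝ => p.1 * p.2) π) :
    ∫ p, p.1 * p.2 ∂π
      = ∫ st : ℝ × ℝ, ∫ p : ℝ × ℝ, layer p.1 st.1 * layer p.2 st.2 ∂π ∂(volume.prod volume) := by
  have hxy (p : ℝ × ℝ) :
      p.1 * p.2 = ∫ st : ℝ × ℝ, layer p.1 st.1 * layer p.2 st.2 ∂(volume.prod volume) := by
    rw [integral_prod_mul (layer p.1) (layer p.2), integral_layer, integral_layer]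
  simp_rw [hxy]
  exact integral_integral_swap (integrable_layer_mul_layer h)

lemma integral_layer_mul_layer [IsFiniteMeasure π] (s t : ℝ) :
    ∫ p : ℝ × ℝ, layer p.1 s * layer p.2 t ∂π
      = π.real (Ioi s ×ˢ Ioi t) - (if t < 0 then 1 else 0) * (π.map Prod.fst).real (Ioi s)
        - (if s < 0 then 1 else 0) * (π.map Prod.snd).real (Ioi t)
        + (if s < 0 then 1 else 0) * (if t < 0 then 1 else 0) * π.real univ := by
  set a : ℝ := if s < 0 then 1 else 0 with ha
  set b : ℝ := if t < 0 then 1 else 0 with hb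
  have hA : MeasurableSet (Ioi s ×ˢ Ioi t) := measurableSet_Ioi.prod measurableSet_Ioi
  have hB : MeasurableSet (Prod.fst ⁻¹' Ioi s : Set (ℝ × ℝ)) := measurable_fst measurableSet_Ioi
  have hC : MeasurableSet (Prod.snd ⁻¹' Ioi t : Set (ℝ × ℝ)) := measurable_snd measurableSet_Ioi
  have hexpand (p : ℝ × ℝ) : layer p.1 s * layer p.2 t
      = (Ioi s ×ˢ Ioi t).indicator 1 p - b * (Prod.fst ⁻¹' Ioi s).indicator 1 p
        - a * (Prod.snd ⁻¹' Ioi t).indicator 1 p + a * b := by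
    classical
    simp only [layer, ha, hb, indicator_apply, mem_prod, mem_preimage, mem_Ioi, Pi.one_apply]
    split_ifs <;> grind
  have hint {u : Set (ℝ × ℝ)} (hu : MeasurableSet u) : Integrable (u.indicator (1 : ℝ × ℝ → ℝ)) π :=
    (integrable_const 1).indicator hu
  have hAB : Integrable (fun p => (Ioi s ×ˢ Ioi t).indicator 1 p
      - b * (Prod.fst ⁻¹' Ioi s).indicator (1 : ℝ × ℝ → ℝ) p) π :=
    (hint hA).sub ((hint hB).const_mul _)
  have hABC : Integrable (fun p => (Ioi s ×ˢ Ioi t).indicator 1 p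
      - b * (Prod.fst ⁻¹' Ioi s).indicator 1 p
      - a * (Prod.snd ⁻¹' Ioi t).indicator (1 : ℝ × ℝ → ℝ) p) π :=
    hAB.sub ((hint hC).const_mul _)
  simp_rw [hexpand]
  rw [integral_add hABC (integrable_const _), integral_sub hAB ((hint hC).const_mul _),
    integral_sub (hint hA) ((hint hB).const_mul _), integral_const_mul, integral_const_mul,
    integral_indicator_one hA, integral_indicator_one hB, integral_indicator_one hC,
    integral_const, map_measureReal_apply measurable_fst measurableSet_Ioi,
    map_measureReal_apply measurable_snd measurableSet_Ioi, smul_eq_mul]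
  ring

lemma integral_fst_mul_snd_le [IsFiniteMeasure ρ] [IsFiniteMeasure π]
    (hfst : ρ.map Prod.fst = π.map Prod.fst) (hsnd : ρ.map Prod.snd = π.map Prod.snd)
    (hρ : Integrable (fun p : ℝ × ℝ => p.1 * p.2) ρ)
    (hπ : Integrable (fun p : ℝ × ℝ => p.1 * p.2) π)
    (hle : ∀ s t, ρ.real (Ioi s ×ˢ Ioi t) ≤ π.real (Ioi s ×ˢ Ioi t)) :
    ∫ p, p.1 * p.2 ∂ρ ≤ ∫ p, p.1 * p.2 ∂π := by
  have huniv : ρ.real univ = π.real univ := by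
    rw [← preimage_univ (f := Prod.fst), ← map_measureReal_apply measurable_fst MeasurableSet.univ,
      hfst, map_measureReal_apply measurable_fst MeasurableSet.univ]
  rw [integral_fst_mul_snd_eq_integral_integral_layer hρ,
    integral_fst_mul_snd_eq_integral_integral_layer hπ]
  refine integral_mono (integrable_layer_mul_layer hρ).integral_prod_right
    (integrable_layer_mul_layer hπ).integral_prod_right fun st => ?_
  rw [integral_layer_mul_layer, integral_layer_mul_layer, hfst, hsnd, huniv]
  linarith [hle st.1 st.2]

lemma measureReal_Ioi_prod_Ioi_le_min [IsFiniteMeasure π] (s t : ℝ) :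
    π.real (Ioi s ×ˢ Ioi t)
      ≤ min ((π.map Prod.fst).real (Ioi s)) ((π.map Prod.snd).real (Ioi t)) := by
  rw [map_measureReal_apply measurable_fst measurableSet_Ioi,
    map_measureReal_apply measurable_snd measurableSet_Ioi]
  exact le_min (measureReal_mono fun p hp => hp.1) (measureReal_mono fun p hp => hp.2)

end Hoeffding

section Cost

variable {π ρ : Measure (ℝ × ℝ)}

lemma integrable_fst_sq_of_map (h : Integrable (fun x : ℝ => x ^ 2) (π.map Prod.fst)) :
    Integrable (fun p : ℝ × ℝ => p.1 ^ 2) π :=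
  (integrable_map_measure (by fun_prop) (by fun_prop)).1 h

lemma integrable_snd_sq_of_map (h : Integrable (fun x : ℝ => x ^ 2) (π.map Prod.snd)) :
    Integrable (fun p : ℝ × ℝ => p.2 ^ 2) π :=
  (integrable_map_measure (by fun_prop) (by fun_prop)).1 h

lemma integrable_fst_mul_snd (h₁ : Integrable (fun x : ℝ => x ^ 2) (π.map Prod.fst))
    (h₂ : Integrable (fun x : ℝ => x ^ 2) (π.map Prod.snd)) :
    Integrable (fun p : ℝ × ℝ => p.1 * p.2) π :=
  ((integrable_fst_sq_of_map h₁).add (integrable_snd_sq_of_map h₂)).mono' (by fun_prop)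
    (ae_of_all _ fun p => by
      rw [norm_mul, Real.norm_eq_abs, Real.norm_eq_abs, Pi.add_apply]
      nlinarith [sq_abs p.1, sq_abs p.2, sq_nonneg (|p.1| - |p.2|)])

lemma integral_sub_sq_eq (h₁ : Integrable (fun x : ℝ => x ^ 2) (π.map Prod.fst))
    (h₂ : Integrable (fun x : ℝ => x ^ 2) (π.map Prod.snd)) :
    ∫ p, (p.1 - p.2) ^ 2 ∂π
      = ∫ x, x ^ 2 ∂(π.map Prod.fst) + ∫ x, x ^ 2 ∂(π.map Prod.snd) - 2 * ∫ p, p.1 * p.2 ∂π := by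
  have hsum : Integrable (fun p : ℝ × ℝ => p.1 ^ 2 + p.2 ^ 2) π :=
    (integrable_fst_sq_of_map h₁).add (integrable_snd_sq_of_map h₂)
  rw [integral_map (by fun_prop) (by fun_prop), integral_map (by fun_prop) (by fun_prop),
    ← integral_add (integrable_fst_sq_of_map h₁) (integrable_snd_sq_of_map h₂),
    ← integral_const_mul, ← integral_sub hsum ((integrable_fst_mul_snd h₁ h₂).const_mul 2)]
  congr 1 with p
  ring

lemma integral_sub_sq_le_of_measureReal_Ioi_prod_Ioi_le [IsFiniteMeasure ρ] [IsFiniteMeasure π]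
    (hfst : ρ.map Prod.fst = π.map Prod.fst) (hsnd : ρ.map Prod.snd = π.map Prod.snd)
    (h₁ : Integrable (fun x : ℝ => x ^ 2) (π.map Prod.fst))
    (h₂ : Integrable (fun x : ℝ => x ^ 2) (π.map Prod.snd))
    (hle : ∀ s t, ρ.real (Ioi s ×ˢ Ioi t) ≤ π.real (Ioi s ×ˢ Ioi t)) :
    ∫ p, (p.1 - p.2) ^ 2 ∂π ≤ ∫ p, (p.1 - p.2) ^ 2 ∂ρ := by
  have hρ₁ : Integrable (fun x : ℝ => x ^ 2) (ρ.map Prod.fst) := by rwa [hfst]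
  have hρ₂ : Integrable (fun x : ℝ => x ^ 2) (ρ.map Prod.snd) := by rwa [hsnd]
  have hmul := integral_fst_mul_snd_le hfst hsnd (integrable_fst_mul_snd hρ₁ hρ₂)
    (integrable_fst_mul_snd h₁ h₂) hle
  rw [integral_sub_sq_eq h₁ h₂, integral_sub_sq_eq hρ₁ hρ₂, hfst, hsnd]
  linarith

end Cost

/-- For probability measures on `ℝ` with finite second moments, the squared 2-Wasserstein
distance equals `∫₀¹ (q_μ(α) − q_ν(α))² dα`: the optimal coupling on the line is the
comonotone (quantile) coupling. -/
theorem stmt_17 (μ ν : Measure ℝ) [IsProbabilityMeasure μ] [IsProbabilityMeasure ν]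
    (hμ2 : Integrable (fun x : ℝ => x ^ 2) μ) (hν2 : Integrable (fun x : ℝ => x ^ 2) ν) :
    wasserstein2Sq μ ν
      = ∫ α in Set.Ioo (0 : ℝ) 1, (quantileFn μ α - quantileFn ν α) ^ 2 := by
  have hfst := map_fst_quantileCoupling μ ν
  have hsnd := map_snd_quantileCoupling μ ν
  refine IsLeast.csInf_eq ⟨⟨quantileCoupling μ ν, inferInstance, hfst, hsnd,
    (integral_sub_sq_quantileCoupling μ ν).symm⟩, ?_⟩
  rintro _ ⟨ρ, _, hρfst, hρsnd, rfl⟩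
  rw [← integral_sub_sq_quantileCoupling]
  refine integral_sub_sq_le_of_measureReal_Ioi_prod_Ioi_le (hρfst.trans hfst.symm)
    (hρsnd.trans hsnd.symm) (by rwa [hfst]) (by rwa [hsnd]) fun s t => ?_
  rw [measureReal_quantileCoupling_Ioi_prod_Ioi, ← hρfst, ← hρsnd]
  exact measureReal_Ioi_prod_Ioi_le_min s t
end
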